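/- Let δ > 0 and let a(n) → a uniformly on [0,1] with all a(n), a continuous. Then there is a subsequence a(n') and a nondecreasing sequence (r_k) in [0,1] such that τ_k^δ(a(n')) → r_k for every k, a(n')_{τ_k^δ(a(n'))} → a_{r_k} for every k, for every k either r_k = 1 or r_{k-1} < r_k, and there exists k' with r_{k'} = 1. -/
import Mathlib


open Set Filter

/-- The deterministic exit times of `b` at level `δ`, capped at `1`. -/
noncomputable def exitTimes (δ : ℝ) (b : ℝ → ℝ) : ℕ → ℝ
  | 0 => 0
  | k + 1 =>
      sInf ({t : ℝ | exitTimes δ b k < t ∧ δ < |b t - b (exitTimes δ b k)|} ∪ {1})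

lemma exitTimes_lowerBound (δ : ℝ) (b : ℝ → ℝ) (k : ℕ) (hk : exitTimes δ b k ≤ 1) :
    exitTimes δ b k ∈ lowerBounds
      ({t : ℝ | exitTimes δ b k < t ∧ δ < |b t - b (exitTimes δ b k)|} ∪ {1}) := by
  rintro s (⟨hs, -⟩ | rfl)
  · exact hs.le
  · exact hk

lemma exitTimes_mem_Icc_le (δ : ℝ) (b : ℝ → ℝ) :
    ∀ k, exitTimes δ b k ∈ Icc (0:ℝ) 1 ∧ exitTimes δ b k ≤ exitTimes δ b (k + 1) := by
  intro k
  induction k with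
  | zero =>
      have h0 : exitTimes δ b 0 = 0 := rfl
      constructor
      · simp [h0]
      · rw [show exitTimes δ b 1 = sInf ({t : ℝ | exitTimes δ b 0 < t ∧
            δ < |b t - b (exitTimes δ b 0)|} ∪ {1}) from rfl]
        exact le_csInf ⟨1, Or.inr rfl⟩ (exitTimes_lowerBound δ b 0 (by simp [h0]))
  | succ k ih =>
      have hlb := exitTimes_lowerBound δ b k ih.1.2
      have h1 : exitTimes δ b (k + 1) ≤ 1 :=
        csInf_le ⟨exitTimes δ b k, hlb⟩ (Or.inr rfl)
      have h0 : (0:ℝ) ≤ exitTimes δ b (k + 1) :=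
        le_trans ih.1.1 ih.2
      refine ⟨⟨h0, h1⟩, ?_⟩
      rw [show exitTimes δ b (k + 2) = sInf ({t : ℝ | exitTimes δ b (k+1) < t ∧
          δ < |b t - b (exitTimes δ b (k+1))|} ∪ {1}) from rfl]
      exact le_csInf ⟨1, Or.inr rfl⟩ (exitTimes_lowerBound δ b (k+1) h1)

lemma exitTimes_mem_Icc (δ : ℝ) (b : ℝ → ℝ) (k : ℕ) : exitTimes δ b k ∈ Icc (0:ℝ) 1 :=
  (exitTimes_mem_Icc_le δ b k).1

lemma exitTimes_le_succ (δ : ℝ) (b : ℝ → ℝ) (k : ℕ) :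
    exitTimes δ b k ≤ exitTimes δ b (k + 1) :=
  (exitTimes_mem_Icc_le δ b k).2

/-- If the `(k+1)`-st exit time is `< 1`, then `b` really jumped by at least `δ` there. -/
lemma exitTimes_jump (δ : ℝ) (b : ℝ → ℝ) (hb : ContinuousOn b (Icc 0 1)) (k : ℕ)
    (h : exitTimes δ b (k + 1) < 1) :
    δ ≤ |b (exitTimes δ b (k + 1)) - b (exitTimes δ b k)| := by
  set τ := exitTimes δ b k with hτdef
  set σ := exitTimes δ b (k + 1) with hσdef
  have hτIcc := exitTimes_mem_Icc δ b k
  have hσIcc := exitTimes_mem_Icc δ b (k + 1)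
  by_contra hlt
  push_neg at hlt
  -- continuity: near σ (within Icc 0 1), |b t - b τ| < δ
  have hcw : ContinuousWithinAt b (Icc 0 1) σ := hb σ hσIcc
  have hball : Metric.ball (b τ) δ ∈ nhds (b σ) :=
    Metric.isOpen_ball.mem_nhds (by simpa [Real.dist_eq] using hlt)
  have hev : ∀ᶠ t in nhdsWithin σ (Icc 0 1), b t ∈ Metric.ball (b τ) δ := hcw hball
  rw [eventually_iff, Metric.mem_nhdsWithin_iff] at hev
  obtain ⟨ε, hε, hevb⟩ := hev
  set ε' : ℝ := min ε (1 - σ) with hε'def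
  have hε' : 0 < ε' := lt_min hε (by linarith)
  have hσε' : σ + ε' ≤ 1 := by
    have : ε' ≤ 1 - σ := min_le_right _ _
    linarith
  -- σ + ε' is a lower bound of the defining set
  have hSlb : σ ∈ lowerBounds ({t : ℝ | τ < t ∧ δ < |b t - b τ|} ∪ {1}) := by
    intro s hs
    exact csInf_le ⟨τ, exitTimes_lowerBound δ b k hτIcc.2⟩ hs
  have hlb : σ + ε' ∈ lowerBounds ({t : ℝ | τ < t ∧ δ < |b t - b τ|} ∪ {1}) := by
    rintro s hsS
    by_contra hcon
    push_neg at hcon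
    have hsσ : σ ≤ s := hSlb hsS
    rcases hsS with ⟨hτs, hjump⟩ | rfl
    · have hs1 : s ≤ 1 := by linarith
      have hs0 : (0:ℝ) ≤ s := le_trans hτIcc.1 hτs.le
      have hds : dist s σ < ε := by
        rw [Real.dist_eq, abs_of_nonneg (by linarith)]
        have : ε' ≤ ε := min_le_left _ _
        linarith
      have := hevb ⟨Metric.mem_ball.mpr hds, hs0, hs1⟩
      rw [mem_setOf_eq, Metric.mem_ball, Real.dist_eq] at this
      exact absurd hjump (not_lt.mpr this.le)
    · linarith
  have : σ + ε' ≤ σ := by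
    rw [hσdef, show exitTimes δ b (k + 1) = sInf ({t : ℝ | τ < t ∧ δ < |b t - b τ|} ∪ {1})
      from rfl]
    exact le_csInf ⟨1, Or.inr rfl⟩ hlb
  linarith

/-- If `a n → a` uniformly on `[0,1]` (all continuous) and `δ > 0`, then along a
subsequence `φ` there is a nondecreasing sequence `r` in `[0,1]` with
`τ_k^δ(a(φ n)) → r k`, `a(φ n)(τ_k^δ(a(φ n))) → a (r k)`, each `r (k+1) = 1` or
`r k < r (k+1)`, and some `r k' = 1`. -/
theorem exitTimes_subseq_limits (δ : ℝ) (hδ : 0 < δ)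
    (A : ℕ → ℝ → ℝ) (a : ℝ → ℝ)
    (hA : ∀ n, ContinuousOn (A n) (Icc 0 1)) (ha : ContinuousOn a (Icc 0 1))
    (hconv : TendstoUniformlyOn A a atTop (Icc 0 1)) :
    ∃ φ : ℕ → ℕ, StrictMono φ ∧ ∃ r : ℕ → ℝ,
      Monotone r ∧ (∀ k, r k ∈ Icc (0:ℝ) 1) ∧
      (∀ k, Tendsto (fun n => exitTimes δ (A (φ n)) k) atTop (nhds (r k))) ∧
      (∀ k, Tendsto (fun n => A (φ n) (exitTimes δ (A (φ n)) k)) atTop (nhds (a (r k)))) ∧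
      (∀ k, r (k + 1) = 1 ∨ r k < r (k + 1)) ∧
      (∃ k', r k' = 1) := by
  -- the exit-time sequences as points of the compact metrizable space `ℕ → [0,1]`
  set x : ℕ → ℕ → Icc (0:ℝ) 1 :=
    fun n k => ⟨exitTimes δ (A n) k, exitTimes_mem_Icc δ (A n) k⟩ with hxdef
  obtain ⟨L, φ, hφ, hL⟩ := CompactSpace.tendsto_subseq x
  set r : ℕ → ℝ := fun k => (L k : ℝ) with hrdef
  -- coordinatewise convergence of the exit times
  have hτ : ∀ k, Tendsto (fun n => exitTimes δ (A (φ n)) k) atTop (nhds (r k)) := by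
    intro k
    have h1 : Tendsto (fun n => (x (φ n)) k) atTop (nhds (L k)) := by
      have := tendsto_pi_nhds.mp hL k
      exact this
    exact (continuous_subtype_val.tendsto (L k)).comp h1
  have hrIcc : ∀ k, r k ∈ Icc (0:ℝ) 1 := fun k => (L k).2
  -- uniform convergence along the subsequence
  have hconv' : TendstoUniformlyOn (fun n => A (φ n)) a atTop (Icc 0 1) := by
    intro u hu
    exact hφ.tendsto_atTop.eventually (hconv u hu)
  -- convergence of the values at exit times
  have hval : ∀ k, Tendsto (fun n => A (φ n) (exitTimes δ (A (φ n)) k)) atTop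
      (nhds (a (r k))) := by
    intro k
    refine hconv'.tendsto_comp (ha (r k) (hrIcc k)) ?_
    exact tendsto_nhdsWithin_of_tendsto_nhds_of_eventually_within _ (hτ k)
      (Eventually.of_forall fun n => exitTimes_mem_Icc δ (A (φ n)) k)
  -- monotonicity of r
  have hmono : Monotone r := by
    refine monotone_nat_of_le_succ fun k => ?_
    exact le_of_tendsto_of_tendsto' (hτ k) (hτ (k + 1))
      fun n => exitTimes_le_succ δ (A (φ n)) k
  -- the key gap estimate in the limit
  have hgap : ∀ k, r (k + 1) < 1 → δ ≤ |a (r (k + 1)) - a (r k)| := by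
    intro k hk1
    have hev : ∀ᶠ n in atTop, exitTimes δ (A (φ n)) (k + 1) < 1 :=
      (hτ (k + 1)).eventually_lt_const hk1
    have hev2 : ∀ᶠ n in atTop,
        δ ≤ |A (φ n) (exitTimes δ (A (φ n)) (k + 1)) - A (φ n) (exitTimes δ (A (φ n)) k)| :=
      hev.mono fun n hn => exitTimes_jump δ (A (φ n)) (hA (φ n)) k hn
    have htend : Tendsto (fun n =>
        |A (φ n) (exitTimes δ (A (φ n)) (k + 1)) - A (φ n) (exitTimes δ (A (φ n)) k)|)
        atTop (nhds |a (r (k + 1)) - a (r k)|) :=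
      ((hval (k + 1)).sub (hval k)).abs
    exact ge_of_tendsto htend hev2
  refine ⟨φ, hφ, r, hmono, hrIcc, hτ, hval, ?_, ?_⟩
  · -- each step: r (k+1) = 1 or strict increase
    intro k
    by_cases h1 : r (k + 1) = 1
    · exact Or.inl h1
    · right
      have hk1 : r (k + 1) < 1 := lt_of_le_of_ne (hrIcc (k + 1)).2 h1
      have hne : r k ≠ r (k + 1) := by
        intro heq
        have := hgap k hk1
        rw [heq, sub_self, abs_zero] at this
        linarith
      exact lt_of_le_of_ne (hmono (Nat.le_succ k)) hne
  · -- some r k' equals 1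
    by_contra hcon
    push_neg at hcon
    have hlt1 : ∀ k, r k < 1 := fun k => lt_of_le_of_ne (hrIcc k).2 (hcon k)
    have hgap' : ∀ k, δ ≤ |a (r (k + 1)) - a (r k)| := fun k => hgap k (hlt1 (k + 1))
    -- r converges to its supremum s ∈ [0,1]
    have hbdd : BddAbove (Set.range r) := ⟨1, by rintro y ⟨k, rfl⟩; exact (hrIcc k).2⟩
    set s : ℝ := ⨆ k, r k with hsdef
    have hs_tendsto : Tendsto r atTop (nhds s) := tendsto_atTop_ciSup hmono hbdd
    have hsIcc : s ∈ Icc (0:ℝ) 1 := by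
      constructor
      · exact le_trans (hrIcc 0).1 (le_ciSup hbdd 0)
      · exact ciSup_le fun k => (hrIcc k).2
    have hras : Tendsto (fun k => a (r k)) atTop (nhds (a s)) := by
      have : Tendsto r atTop (nhdsWithin s (Icc 0 1)) :=
        tendsto_nhdsWithin_of_tendsto_nhds_of_eventually_within _ hs_tendsto
          (Eventually.of_forall hrIcc)
      exact (ha s hsIcc).tendsto.comp this
    have hras' : Tendsto (fun k => a (r (k + 1))) atTop (nhds (a s)) :=
      hras.comp (tendsto_add_atTop_nat 1)
    have hdiff : Tendsto (fun k => |a (r (k + 1)) - a (r k)|) atTop (nhds 0) := by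
      have := (hras'.sub hras).abs
      simpa using this
    have : δ ≤ (0:ℝ) := ge_of_tendsto hdiff (Eventually.of_forall hgap')
    linarith
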